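/- Suppose M_r ∈ ℝ^{ρ_r×p} and M_c ∈ ℝ^{n×ρ_c} satisfy the RIP with constant δ ∈ (0,1): (1−δ)‖Y‖_F² ≤ (np/(ρ_r ρ_c)) ‖M_r Y M_c‖_F² ≤ (1+δ)‖Y‖_F² for all Y ∈ LR(P_{k_r}, Q_{k_c}). Let X̄ ∈ LR(P_{k_r}, Q_{k_c}), Ẽ ∈ ℝ^{ρ_r×ρ_c}, and X̃ = M_r X̄ M_c + Ẽ. If X* is any minimizer of ‖M_r X M_c − X̃‖_F² over all X ∈ ℝ^{p×n} whose columns lie in span(P_{k_r}) and whose rows lie in span(Q_{k_c}), then ‖X* − X̄‖_F ≤ 2 √(np/(ρ_c ρ_r (1−δ))) ‖Ẽ‖_F. -/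

import Mathlib

/-!
Put `D = X* − X̄`, which lies in `LR(P_{k_r}, Q_{k_c})`. Comparing `X*` with the competitor `X̄`
gives `‖M_r X* M_c − X̃‖_F ≤ ‖Ẽ‖_F`, so by the triangle inequality `‖M_r D M_c‖_F ≤ 2 ‖Ẽ‖_F`.
The lower RIP bound applied to `D` then turns this into the bound on `‖D‖_F`.
-/

open Matrix

/-- Frobenius norm of a real matrix. -/
noncomputable def frobNorm {m n : Type*} [Fintype m] [Fintype n] (A : Matrix m n ℝ) : ℝ :=
  Real.sqrt (∑ i, ∑ j, (A i j) ^ 2)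

/-- Euclidean norm of a real vector. -/
noncomputable def vecNorm {n : Type*} [Fintype n] (x : n → ℝ) : ℝ :=
  Real.sqrt (∑ i, (x i) ^ 2)

/-- A row-selection matrix: its rows are distinct standard basis vectors of `ℝ^p`. -/
def IsRowSelection {ρ p : ℕ} (M : Matrix (Fin ρ) (Fin p) ℝ) : Prop :=
  ∃ f : Fin ρ → Fin p, Function.Injective f ∧ ∀ i j, M i j = if j = f i then 1 else 0

/-- A column-selection matrix: its columns are distinct standard basis vectors of `ℝ^n`. -/
def IsColSelection {n ρ : ℕ} (M : Matrix (Fin n) (Fin ρ) ℝ) : Prop :=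
  ∃ f : Fin ρ → Fin n, Function.Injective f ∧ ∀ i j, M i j = if i = f j then 1 else 0

/-- `y` lies in the span of the columns of `P`. -/
def inColSpan {p k : ℕ} (P : Matrix (Fin p) (Fin k) ℝ) (y : Fin p → ℝ) : Prop :=
  ∃ c : Fin k → ℝ, y = P.mulVec c

/-- `Y ∈ LR(P, Q)`: every column of `Y` lies in the column span of `P` and every row of `Y`
lies in the column span of `Q`. -/
def memLR {p n kr kc : ℕ} (P : Matrix (Fin p) (Fin kr) ℝ) (Q : Matrix (Fin n) (Fin kc) ℝ)
    (Y : Matrix (Fin p) (Fin n) ℝ) : Prop :=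
  (∀ j, inColSpan P (fun i => Y i j)) ∧ (∀ i, inColSpan Q (fun j => Y i j))

/-- Graph cumulative coherence `ν = max_i √n ‖Q^⊤ e_i‖₂`. -/
noncomputable def coherence {n k : ℕ} (Q : Matrix (Fin n) (Fin k) ℝ) : ℝ :=
  ⨆ i : Fin n, Real.sqrt n * vecNorm (fun j => Q i j)

lemma frobNorm_nonneg {m n : Type*} [Fintype m] [Fintype n] (A : Matrix m n ℝ) :
    0 ≤ frobNorm A :=
  Real.sqrt_nonneg _

section FrobeniusNorm

attribute [local instance] Matrix.frobeniusNormedAddCommGroup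

lemma frobNorm_eq_norm {m n : Type*} [Fintype m] [Fintype n] (A : Matrix m n ℝ) :
    frobNorm A = ‖A‖ := by
  rw [frobNorm, frobenius_norm_def, Real.sqrt_eq_rpow]
  simp only [Real.norm_eq_abs, Real.rpow_two, sq_abs]

lemma norm_sub_le_two_mul_of_norm_sub_le {E : Type*} [SeminormedAddCommGroup E] {a b e y : E}
    (hy : y = b + e) (hmin : ‖a - y‖ ≤ ‖b - y‖) : ‖a - b‖ ≤ 2 * ‖e‖ :=
  calc ‖a - b‖ = ‖(a - y) + e‖ := by rw [hy]; abel_nf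
    _ ≤ ‖a - y‖ + ‖e‖ := norm_add_le _ _
    _ ≤ ‖b - y‖ + ‖e‖ := by gcongr
    _ = 2 * ‖e‖ := by rw [hy, sub_add_cancel_left, norm_neg]; ring

lemma frobNorm_sub_le_two_mul_of_sq_le {m n : Type*} [Fintype m] [Fintype n]
    {A B E Y : Matrix m n ℝ} (hY : Y = B + E)
    (hmin : frobNorm (A - Y) ^ 2 ≤ frobNorm (B - Y) ^ 2) :
    frobNorm (A - B) ≤ 2 * frobNorm E := by
  simp only [frobNorm_eq_norm] at hmin ⊢
  exact norm_sub_le_two_mul_of_norm_sub_le hY ((sq_le_sq₀ (norm_nonneg _) (norm_nonneg _)).1 hmin)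

end FrobeniusNorm

lemma memLR_sub {p n kr kc : ℕ} {P : Matrix (Fin p) (Fin kr) ℝ} {Q : Matrix (Fin n) (Fin kc) ℝ}
    {X Y : Matrix (Fin p) (Fin n) ℝ} (hX : memLR P Q X) (hY : memLR P Q Y) :
    memLR P Q (X - Y) := by
  constructor
  · intro j
    obtain ⟨c, hc⟩ := hX.1 j
    obtain ⟨d, hd⟩ := hY.1 j
    exact ⟨c - d, by rw [mulVec_sub, ← hc, ← hd]; rfl⟩
  · intro i
    obtain ⟨c, hc⟩ := hX.2 i
    obtain ⟨d, hd⟩ := hY.2 i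
    exact ⟨c - d, by rw [mulVec_sub, ← hc, ← hd]; rfl⟩

lemma le_sqrt_div_mul_of_mul_sq_le {a c x y : ℝ} (ha : 0 < a) (hy : 0 ≤ y)
    (h : a * x ^ 2 ≤ c * y ^ 2) : x ≤ Real.sqrt (c / a) * y := by
  have hx : x ^ 2 ≤ c / a * y ^ 2 := by
    rw [div_mul_eq_mul_div, le_div_iff₀ ha]
    linarith
  calc x ≤ |x| := le_abs_self x
    _ ≤ Real.sqrt (c / a * y ^ 2) := Real.abs_le_sqrt hx
    _ = Real.sqrt (c / a) * y := by rw [Real.sqrt_mul' _ (sq_nonneg y), Real.sqrt_sq hy]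

theorem ideal_decoder_bound
    (p n ρr ρc kr kc : ℕ)
    (Mr : Matrix (Fin ρr) (Fin p) ℝ)
    (Mc : Matrix (Fin n) (Fin ρc) ℝ)
    (Pkr : Matrix (Fin p) (Fin kr) ℝ)
    (Qkc : Matrix (Fin n) (Fin kc) ℝ)
    (δ : ℝ) (hδ : δ ∈ Set.Ioo (0 : ℝ) 1)
    (hRIP : ∀ Y : Matrix (Fin p) (Fin n) ℝ, memLR Pkr Qkc Y →
      (1 - δ) * (frobNorm Y) ^ 2 ≤
        ((n : ℝ) * p / ((ρr : ℝ) * ρc)) * (frobNorm (Mr * Y * Mc)) ^ 2 ∧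
      ((n : ℝ) * p / ((ρr : ℝ) * ρc)) * (frobNorm (Mr * Y * Mc)) ^ 2 ≤
        (1 + δ) * (frobNorm Y) ^ 2)
    (Xbar : Matrix (Fin p) (Fin n) ℝ) (hXbar : memLR Pkr Qkc Xbar)
    (Etil : Matrix (Fin ρr) (Fin ρc) ℝ)
    (Xtil : Matrix (Fin ρr) (Fin ρc) ℝ) (hXtil : Xtil = Mr * Xbar * Mc + Etil)
    (Xstar : Matrix (Fin p) (Fin n) ℝ) (hXstarLR : memLR Pkr Qkc Xstar)
    (hmin : ∀ X : Matrix (Fin p) (Fin n) ℝ, memLR Pkr Qkc X →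
      (frobNorm (Mr * Xstar * Mc - Xtil)) ^ 2 ≤ (frobNorm (Mr * X * Mc - Xtil)) ^ 2) :
    frobNorm (Xstar - Xbar) ≤
      2 * Real.sqrt ((n : ℝ) * p / ((ρc : ℝ) * ρr * (1 - δ))) * frobNorm Etil := by
  set c : ℝ := (n : ℝ) * p / ((ρr : ℝ) * ρc)
  have hmeas : frobNorm (Mr * (Xstar - Xbar) * Mc) ≤ 2 * frobNorm Etil := by
    rw [Matrix.mul_sub, Matrix.sub_mul]
    exact frobNorm_sub_le_two_mul_of_sq_le hXtil (hmin Xbar hXbar)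
  have hsq : (1 - δ) * frobNorm (Xstar - Xbar) ^ 2 ≤ c * (2 * frobNorm Etil) ^ 2 :=
    (hRIP _ (memLR_sub hXstarLR hXbar)).1.trans <|
      mul_le_mul_of_nonneg_left (pow_le_pow_left₀ (frobNorm_nonneg _) hmeas 2) (by positivity)
  have hc : c / (1 - δ) = (n : ℝ) * p / ((ρc : ℝ) * ρr * (1 - δ)) := by
    rw [div_div, mul_comm (ρr : ℝ)]
  calc frobNorm (Xstar - Xbar)
      ≤ Real.sqrt (c / (1 - δ)) * (2 * frobNorm Etil) :=
        le_sqrt_div_mul_of_mul_sq_le (by linarith [hδ.2])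
          (mul_nonneg zero_le_two (frobNorm_nonneg _)) hsq
    _ = _ := by rw [hc]; ring
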